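/- Let d be an odd prime, ρ a density matrix on ℂ^d⊗ℂ^d, |Φ⁺⟩ = (1/√d)Σ_m|mm⟩, and k ∈ {0,...,d−1}. Define F̃₂ = Σ_{j}⟨ĵ_k ĵ_k*|ρ|ĵ_k ĵ_k*⟩ − 1/d − Σ' γ̃_{mm'nn'} √(⟨m'n'|ρ|m'n'⟩⟨mn|ρ|mn⟩), where the sum Σ' runs over indices with m≠m', m≠n, n≠n', n'≠m', and γ̃_{mm'nn'} = 1/d if (m−m'−n+n') ≡ 0 (mod d) and 0 otherwise. Then F̃₂ ≤ (1/d)Σ_{m≠n}⟨mm|ρ|nn⟩, and hence ⟨Φ⁺|ρ|Φ⁺⟩ ≥ (1/d)Σ_m⟨mm|ρ|mm⟩ + F̃₂. -/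

import Mathlib

open Matrix
open scoped ComplexOrder

/-- Component `m` of the Wootters–Fields basis vector `|ĵ_k⟩`. -/
noncomputable def wfComp (d : ℕ) (k j m : Fin d) : ℂ :=
  ((1 / Real.sqrt d : ℝ) : ℂ) *
    Complex.exp (2 * Real.pi * Complex.I *
      (((j.val * m.val + k.val * m.val ^ 2 : ℕ) : ℂ)) / d)

/-- The product vector `|ĵ_k ĵ'_k*⟩ = |ĵ_k⟩ ⊗ |ĵ'_k*⟩` on `ℂ^d ⊗ ℂ^d`. -/
noncomputable def wfPair (d : ℕ) (k j j' : Fin d) : Fin d × Fin d → ℂ :=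
  fun p => wfComp d k j p.1 * (starRingEnd ℂ) (wfComp d k j' p.2)

/-- `γ̃_{mm'nn'} = 1/d` if `(m−m'−n+n') ≡ 0 (mod d)` and `0` otherwise. -/
noncomputable def gammaCoef (d : ℕ) (m m' n n' : Fin d) : ℝ :=
  if ((m.val : ℤ) - (m'.val : ℤ) - (n.val : ℤ) + (n'.val : ℤ)) % (d : ℤ) = 0
  then 1 / d else 0

/-!
Expanding the Wootters–Fields states in the computational basis turns
`∑ⱼ ⟨ĵ_k ĵ_k*|ρ|ĵ_k ĵ_k*⟩` into `(1/d²) ∑ c_{mnm'n'} ⟨m'n'|ρ|mn⟩`, where the character sum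
`c` over `j` vanishes unless `m - m' - n + n' ≡ 0 (mod d)` and then has modulus `d`. As all
indices lie in `[0, d)`, that congruence forces `m = m' ↔ n = n'` and `m = n ↔ m' = n'`.
Hence the terms with `m = m'`, `n = n'` add up to `tr ρ / d = 1/d`, those with
`m = n ≠ m' = n'` to the coherences `(1/d) ∑_{m≠n} ⟨mm|ρ|nn⟩`, and each remaining term has its
indices distinct as in `Σ'` and is bounded by `γ̃ √(⟨m'n'|ρ|m'n'⟩⟨mn|ρ|mn⟩)` through the
`2 × 2` principal minors of `ρ`. The bound on `⟨Φ⁺|ρ|Φ⁺⟩ = (1/d) ∑_{m,n} ⟨mm|ρ|nn⟩` follows by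
splitting off its diagonal.
-/

theorem IsPrimitiveRoot.sum_fin_zpow_mul {K : Type*} [Field K] {ζ : K} {d : ℕ}
    (hζ : IsPrimitiveRoot ζ d) (A : ℤ) :
    ∑ j : Fin d, ζ ^ ((j : ℤ) * A) = if (d : ℤ) ∣ A then (d : K) else 0 := by
  have hpow (j : Fin d) : ζ ^ ((j : ℤ) * A) = (ζ ^ A) ^ (j : ℕ) := by
    rw [mul_comm, _root_.zpow_mul, zpow_natCast]
  simp_rw [hpow, Fin.sum_univ_eq_sum_range (fun i => (ζ ^ A) ^ i)]
  split_ifs with hA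
  · simp [(hζ.zpow_eq_one_iff_dvd A).2 hA]
  · have hζA : (ζ ^ A) ^ d = 1 := by
      rw [← zpow_natCast, ← _root_.zpow_mul, mul_comm, _root_.zpow_mul, zpow_natCast,
        hζ.pow_eq_one, _root_.one_zpow]
    rw [geom_sum_eq (mt (hζ.zpow_eq_one_iff_dvd A).1 hA), hζA, sub_self, zero_div]

theorem Fin.eq_of_intCast_dvd_sub {d : ℕ} {a b : Fin d} (h : (d : ℤ) ∣ (a : ℤ) - b) :
    a = b := by
  have := Int.eq_zero_of_abs_lt_dvd h (by rw [abs_lt]; omega)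
  omega

theorem Fin.eq_iff_eq_of_dvd_sub_sub_add {d : ℕ} {a b c e : Fin d}
    (h : (d : ℤ) ∣ (a : ℤ) - b - c + e) : a = b ↔ c = e := by
  constructor
  · rintro rfl
    refine Fin.eq_of_intCast_dvd_sub ?_
    rwa [show (c : ℤ) - e = -((a : ℤ) - a - c + e) by ring, dvd_neg]
  · rintro rfl
    refine Fin.eq_of_intCast_dvd_sub ?_
    rwa [show (a : ℤ) - b = a - b - c + c by ring]

theorem star_dotProduct_mulVec_eq_sum {ι R : Type*} [Fintype ι] [CommSemiring R] [StarRing R]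
    (A : Matrix ι ι R) (u v : ι → R) :
    star u ⬝ᵥ A *ᵥ v = ∑ p, ∑ q, star (u p) * A p q * v q := by
  simp [dotProduct, mulVec, Finset.mul_sum, mul_assoc]

theorem star_dotProduct_mulVec_ite_diag {ι R : Type*} [Fintype ι] [DecidableEq ι]
    [CommSemiring R] [StarRing R] (A : Matrix (ι × ι) (ι × ι) R) (c : R) :
    star (fun p : ι × ι => if p.1 = p.2 then c else 0) ⬝ᵥ
        A *ᵥ (fun p : ι × ι => if p.1 = p.2 then c else 0) =
      star c * c * ∑ m, ∑ n, A (m, m) (n, n) := by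
  simp [star_dotProduct_mulVec_eq_sum, Fintype.sum_prod_type, Finset.mul_sum, mul_right_comm,
    apply_ite star, ite_mul]

theorem sum_sum_eq_sum_diag_add_sum_ne {ι M : Type*} [Fintype ι] [DecidableEq ι]
    [AddCommMonoid M] (f : ι → ι → M) :
    ∑ m, ∑ n, f m n = ∑ m, f m m + ∑ m, ∑ n, if m ≠ n then f m n else 0 := by
  rw [← Finset.sum_add_distrib]
  refine Finset.sum_congr rfl fun m _ => ?_
  rw [Finset.sum_ite, Finset.sum_const_zero, add_zero, Finset.filter_ne,
    Finset.add_sum_erase _ _ (Finset.mem_univ m)]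

theorem Matrix.PosSemidef.norm_apply_le_sqrt {ι : Type*} [Fintype ι] {ρ : Matrix ι ι ℂ}
    (hρ : ρ.PosSemidef) (p q : ι) :
    ‖ρ p q‖ ≤ Real.sqrt ((ρ p p).re * (ρ q q).re) := by
  classical
  have hdet := (hρ.submatrix ![p, q]).det_nonneg
  rw [det_fin_two, Complex.nonneg_iff] at hdet
  have hqp : ρ q p = starRingEnd ℂ (ρ p q) := (hρ.1.apply q p).symm
  have hpp := (Complex.nonneg_iff.1 (hρ.diag_nonneg (i := p))).2
  apply Real.le_sqrt_of_sq_le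
  simp [hqp, Complex.mul_conj, Complex.normSq_eq_norm_sq, ← hpp] at hdet
  exact_mod_cast hdet.1

theorem ofReal_one_div_sqrt_mul_self (d : ℕ) :
    ((1 / Real.sqrt d : ℝ) : ℂ) * ((1 / Real.sqrt d : ℝ) : ℂ) = 1 / d := by
  rw [← Complex.ofReal_mul, one_div_mul_one_div, Real.mul_self_sqrt (Nat.cast_nonneg d)]
  push_cast
  ring

noncomputable def wfRoot (d : ℕ) : ℂ := Complex.exp (2 * Real.pi * Complex.I / d)

theorem isPrimitiveRoot_wfRoot {d : ℕ} (hd : d ≠ 0) : IsPrimitiveRoot (wfRoot d) d :=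
  Complex.isPrimitiveRoot_exp d hd

theorem wfRoot_ne_zero (d : ℕ) : wfRoot d ≠ 0 := Complex.exp_ne_zero _

theorem conj_wfRoot_zpow (d : ℕ) (n : ℤ) : starRingEnd ℂ (wfRoot d ^ n) = wfRoot d ^ (-n) := by
  simp only [wfRoot, map_zpow₀, ← Complex.exp_conj, map_div₀, map_mul, Complex.conj_I,
    Complex.conj_ofReal, map_ofNat, Complex.conj_natCast, _root_.zpow_neg, ← _root_.inv_zpow,
    ← Complex.exp_neg]
  ring_nf

theorem norm_wfRoot_zpow (d : ℕ) (n : ℤ) : ‖wfRoot d ^ n‖ = 1 := by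
  simp [wfRoot, Complex.norm_exp, Complex.div_re]

theorem wfPair_self_apply (d : ℕ) (k j m n : Fin d) :
    wfPair d k j j (m, n) = wfRoot d ^ ((j : ℤ) * (m - n) + k * (m ^ 2 - n ^ 2)) / d := by
  have hcomp (i l : Fin d) :
      wfComp d k i l = ((1 / Real.sqrt d : ℝ) : ℂ) * wfRoot d ^ ((i : ℤ) * l + k * l ^ 2) := by
    rw [wfComp, wfRoot, ← Complex.exp_int_mul]
    push_cast
    ring_nf
  simp only [wfPair, hcomp, map_mul, Complex.conj_ofReal, conj_wfRoot_zpow]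
  rw [mul_mul_mul_comm, ofReal_one_div_sqrt_mul_self, ← zpow_add₀ (wfRoot_ne_zero d),
    one_div_mul_eq_div]
  ring_nf

/-- The paper's `c_{mnm'n'} / d²`. -/
noncomputable def wfCoef (d : ℕ) (k m n m' n' : Fin d) : ℂ :=
  if (d : ℤ) ∣ (m : ℤ) - m' - n + n' then
    wfRoot d ^ ((k : ℤ) * ((m : ℤ) ^ 2 - (m' : ℤ) ^ 2 - (n : ℤ) ^ 2 + (n' : ℤ) ^ 2)) / d
  else 0

theorem sum_conj_wfPair_mul_wfPair {d : ℕ} (k m n m' n' : Fin d) :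
    ∑ j, starRingEnd ℂ (wfPair d k j j (m', n')) * wfPair d k j j (m, n) =
      wfCoef d k m n m' n' := by
  have hterm (j : Fin d) :
      starRingEnd ℂ (wfPair d k j j (m', n')) * wfPair d k j j (m, n) =
        wfRoot d ^ ((j : ℤ) * ((m : ℤ) - m' - n + n')) *
          (wfRoot d ^ ((k : ℤ) * ((m : ℤ) ^ 2 - (m' : ℤ) ^ 2 - (n : ℤ) ^ 2 + (n' : ℤ) ^ 2)) /
            d ^ 2) := by
    rw [wfPair_self_apply, wfPair_self_apply, map_div₀, conj_wfRoot_zpow, Complex.conj_natCast,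
      div_mul_div_comm, ← zpow_add₀ (wfRoot_ne_zero d), mul_div_assoc',
      ← zpow_add₀ (wfRoot_ne_zero d), sq]
    ring_nf
  have hd : (d : ℂ) ≠ 0 := Nat.cast_ne_zero.2 m.pos.ne'
  simp_rw [hterm, ← Finset.sum_mul, (isPrimitiveRoot_wfRoot m.pos.ne').sum_fin_zpow_mul, wfCoef]
  split_ifs
  · field_simp
  · exact zero_mul _

theorem gammaCoef_eq_ite (d : ℕ) (m m' n n' : Fin d) :
    gammaCoef d m m' n n' = if (d : ℤ) ∣ (m : ℤ) - m' - n + n' then (1 / d : ℝ) else 0 := by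
  simp only [gammaCoef, ← Int.dvd_iff_emod_eq_zero]

theorem norm_wfCoef {d : ℕ} (k m n m' n' : Fin d) :
    ‖wfCoef d k m n m' n'‖ = gammaCoef d m m' n n' := by
  rw [wfCoef, gammaCoef_eq_ite]
  split_ifs
  · rw [norm_div, norm_wfRoot_zpow, Complex.norm_natCast, one_div]
  · exact norm_zero

theorem sum_wfPair_expectation {d : ℕ} (k : Fin d)
    (ρ : Matrix (Fin d × Fin d) (Fin d × Fin d) ℂ) :
    ∑ j, star (wfPair d k j j) ⬝ᵥ ρ *ᵥ wfPair d k j j =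
      ∑ m, ∑ n, ∑ m', ∑ n', wfCoef d k m n m' n' * ρ (m', n') (m, n) := by
  calc ∑ j, star (wfPair d k j j) ⬝ᵥ ρ *ᵥ wfPair d k j j
      = ∑ p, ∑ q, ∑ j, starRingEnd ℂ (wfPair d k j j p) * wfPair d k j j q * ρ p q := by
        simp_rw [star_dotProduct_mulVec_eq_sum, Complex.star_def,
          mul_right_comm (starRingEnd ℂ _)]
        rw [Finset.sum_comm]
        exact Finset.sum_congr rfl fun p _ => Finset.sum_comm
    _ = ∑ q, ∑ p, (∑ j, starRingEnd ℂ (wfPair d k j j p) * wfPair d k j j q) * ρ p q := by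
        rw [Finset.sum_comm]
        simp_rw [Finset.sum_mul]
    _ = _ := by simp_rw [Fintype.sum_prod_type, sum_conj_wfPair_mul_wfPair]

theorem re_wfCoef_mul_le {d : ℕ} (k : Fin d) {ρ : Matrix (Fin d × Fin d) (Fin d × Fin d) ℂ}
    (hρ : ρ.PosSemidef) (m n m' n' : Fin d) :
    (wfCoef d k m n m' n' * ρ (m', n') (m, n)).re ≤
      (if m = m' ∧ n = n' then (ρ (m, n) (m, n)).re / d else 0) +
      (if m = n ∧ m' = n' ∧ m ≠ m' then (ρ (m', m') (m, m)).re / d else 0) +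
      (if m ≠ m' ∧ m ≠ n ∧ n ≠ n' ∧ n' ≠ m' then
        gammaCoef d m m' n n' * Real.sqrt ((ρ (m', n') (m', n')).re * (ρ (m, n) (m, n)).re)
      else 0) := by
  by_cases hdiag : m = m' ∧ n = n'
  · obtain ⟨rfl, rfl⟩ := hdiag
    simp [wfCoef, inv_mul_eq_div]
  by_cases hcoh : m = n ∧ m' = n'
  · obtain ⟨rfl, rfl⟩ := hcoh
    have hne : m ≠ m' := fun h => hdiag ⟨h, h⟩
    simp [wfCoef, inv_mul_eq_div, hne]
  rw [if_neg hdiag, if_neg fun h => hcoh ⟨h.1, h.2.1⟩, zero_add, zero_add]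
  calc (wfCoef d k m n m' n' * ρ (m', n') (m, n)).re
      ≤ ‖wfCoef d k m n m' n'‖ * ‖ρ (m', n') (m, n)‖ :=
        (Complex.re_le_norm _).trans_eq (norm_mul _ _)
    _ ≤ gammaCoef d m m' n n' * Real.sqrt ((ρ (m', n') (m', n')).re * (ρ (m, n) (m, n)).re) := by
        rw [norm_wfCoef]
        exact mul_le_mul_of_nonneg_left (hρ.norm_apply_le_sqrt _ _)
          (norm_wfCoef k .. ▸ norm_nonneg _)
    _ = _ := by
        split_ifs with hdistinct
        · rfl
        rw [gammaCoef_eq_ite, if_neg, zero_mul]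
        intro hdvd
        have h1 : m = m' ↔ n = n' := Fin.eq_iff_eq_of_dvd_sub_sub_add hdvd
        have h2 : m = n ↔ m' = n' := Fin.eq_iff_eq_of_dvd_sub_sub_add
          (by rwa [show (m : ℤ) - n - m' + n' = m - m' - n + n' by ring])
        exact hdistinct ⟨fun h => hdiag ⟨h, h1.1 h⟩, fun h => hcoh ⟨h, h2.1 h⟩,
          fun h => hdiag ⟨h1.2 h, h⟩, fun h => hcoh ⟨h2.2 h.symm, h.symm⟩⟩

theorem re_sum_wfPair_expectation_le {d : ℕ} (k : Fin d)
    {ρ : Matrix (Fin d × Fin d) (Fin d × Fin d) ℂ} (hρ : ρ.PosSemidef) :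
    (∑ j, star (wfPair d k j j) ⬝ᵥ ρ *ᵥ wfPair d k j j).re ≤
      (∑ m, ∑ n, (ρ (m, n) (m, n)).re) / d +
      ((1 / (d : ℂ)) * ∑ m, ∑ n, if m ≠ n then ρ (m, m) (n, n) else 0).re +
      ∑ m, ∑ n, ∑ m', ∑ n',
        if m ≠ m' ∧ m ≠ n ∧ n ≠ n' ∧ n' ≠ m' then
          gammaCoef d m m' n n' * Real.sqrt ((ρ (m', n') (m', n')).re * (ρ (m, n) (m, n)).re)
        else 0 := by
  have hdiag : ∑ m : Fin d, ∑ n : Fin d, ∑ m' : Fin d, ∑ n' : Fin d,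
      (if m = m' ∧ n = n' then (ρ (m, n) (m, n)).re / d else 0) =
        (∑ m, ∑ n, (ρ (m, n) (m, n)).re) / d := by
    simp [ite_and, Finset.sum_div]
  have hcoh : ∑ m : Fin d, ∑ n : Fin d, ∑ m' : Fin d, ∑ n' : Fin d,
      (if m = n ∧ m' = n' ∧ m ≠ m' then (ρ (m', m') (m, m)).re / d else 0) =
        ((1 / (d : ℂ)) * ∑ m, ∑ n, if m ≠ n then ρ (m, m) (n, n) else 0).re := by
    rw [one_div_mul_eq_div, Complex.div_natCast_re, Complex.re_sum, Finset.sum_div]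
    simp only [ne_eq, ite_and, ite_not, Finset.sum_ite_irrel, Finset.sum_ite_eq,
      Finset.mem_univ, ↓reduceIte, Finset.sum_const_zero, Complex.re_sum, apply_ite Complex.re,
      Complex.zero_re]
    rw [Finset.sum_comm]
    simp only [Finset.sum_div, ite_div, zero_div, eq_comm]
  rw [sum_wfPair_expectation, ← hdiag, ← hcoh]
  simp only [Complex.re_sum, ← Finset.sum_add_distrib]
  gcongr with m _ n _ m' _ n'
  exact re_wfCoef_mul_le k hρ m n m' n'

theorem stmt_14_general (d : ℕ) (k : Fin d)
    (ρ : Matrix (Fin d × Fin d) (Fin d × Fin d) ℂ) (hρ : ρ.PosSemidef)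
    (htr : ∑ m : Fin d, ∑ n : Fin d, ρ (m, n) (m, n) = 1)
    (Φ : Fin d × Fin d → ℂ)
    (hΦ : ∀ p : Fin d × Fin d,
      Φ p = if p.1 = p.2 then ((1 / Real.sqrt d : ℝ) : ℂ) else 0)
    (F₂t : ℝ)
    (hF₂t : F₂t = (∑ j : Fin d, star (wfPair d k j j) ⬝ᵥ ρ *ᵥ wfPair d k j j).re
      - 1 / d
      - ∑ m : Fin d, ∑ n : Fin d, ∑ m' : Fin d, ∑ n' : Fin d,
          if m ≠ m' ∧ m ≠ n ∧ n ≠ n' ∧ n' ≠ m'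
          then gammaCoef d m m' n n' *
            Real.sqrt ((ρ ((m', n')) ((m', n'))).re * (ρ ((m, n)) ((m, n))).re)
          else 0) :
    F₂t ≤ ((1 / (d : ℂ)) * ∑ m : Fin d, ∑ n : Fin d,
        if m ≠ n then ρ (m, m) (n, n) else 0).re ∧
    (star Φ ⬝ᵥ ρ *ᵥ Φ).re ≥
      (1 / (d : ℝ)) * ∑ m : Fin d, (ρ ((m, m)) ((m, m))).re + F₂t := by
  have htr_re : ∑ m : Fin d, ∑ n : Fin d, (ρ (m, n) (m, n)).re = 1 := by
    simpa [Complex.re_sum] using congrArg Complex.re htr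
  have hF : F₂t ≤ ((1 / (d : ℂ)) * ∑ m : Fin d, ∑ n : Fin d,
      if m ≠ n then ρ (m, m) (n, n) else 0).re := by
    have := re_sum_wfPair_expectation_le k hρ
    rw [htr_re] at this
    linarith
  have hΦρΦ : (star Φ ⬝ᵥ ρ *ᵥ Φ).re = (1 / (d : ℝ)) * ∑ m : Fin d, (ρ (m, m) (m, m)).re +
      ((1 / (d : ℂ)) * ∑ m : Fin d, ∑ n : Fin d, if m ≠ n then ρ (m, m) (n, n) else 0).re := by
    rw [funext hΦ, star_dotProduct_mulVec_ite_diag, Complex.star_def, Complex.conj_ofReal,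
      ofReal_one_div_sqrt_mul_self, sum_sum_eq_sum_diag_add_sum_ne, mul_add, Complex.add_re,
      one_div_mul_eq_div, Complex.div_natCast_re, Complex.re_sum]
    ring
  exact ⟨hF, by linarith⟩

theorem stmt_14 (d : ℕ) (hd : d.Prime) (hodd : Odd d) (k : Fin d)
    (ρ : Matrix (Fin d × Fin d) (Fin d × Fin d) ℂ) (hρ : ρ.PosSemidef)
    (htr : ∑ m : Fin d, ∑ n : Fin d, ρ (m, n) (m, n) = 1)
    (Φ : Fin d × Fin d → ℂ)
    (hΦ : ∀ p : Fin d × Fin d,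
      Φ p = if p.1 = p.2 then ((1 / Real.sqrt d : ℝ) : ℂ) else 0)
    (F₂t : ℝ)
    (hF₂t : F₂t = (∑ j : Fin d, star (wfPair d k j j) ⬝ᵥ ρ *ᵥ wfPair d k j j).re
      - 1 / d
      - ∑ m : Fin d, ∑ n : Fin d, ∑ m' : Fin d, ∑ n' : Fin d,
          if m ≠ m' ∧ m ≠ n ∧ n ≠ n' ∧ n' ≠ m'
          then gammaCoef d m m' n n' *
            Real.sqrt ((ρ ((m', n')) ((m', n'))).re * (ρ ((m, n)) ((m, n))).re)
          else 0) :
    F₂t ≤ ((1 / (d : ℂ)) * ∑ m : Fin d, ∑ n : Fin d,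
        if m ≠ n then ρ (m, m) (n, n) else 0).re ∧
    (star Φ ⬝ᵥ ρ *ᵥ Φ).re ≥
      (1 / (d : ℝ)) * ∑ m : Fin d, (ρ ((m, m)) ((m, m))).re + F₂t :=
  stmt_14_general d k ρ hρ htr Φ hΦ F₂t hF₂t
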